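/- Let (ξ_1, …, ξ_n) be a symmetrically exchangeable tuple of random vectors in ℝ^d with partial sums S_k = ξ_1 + ⋯ + ξ_k, and let A : ℝ^n → ℝ^d be the random linear map sending the k-th standard basis vector e_k to ξ_k. Let C̄ = {x ∈ ℝ^n : 0 ≤ x_1 ≤ x_2 ≤ ⋯ ≤ x_n} be the closed Weyl chamber of type B_n. Then for every signed permutation g of ℝ^n (i.e., every orthogonal map g with g e_k = ε_k e_{σ(k)} for some permutation σ and signs ε_k ∈ {−1,+1}), one has P[0 ∈ Conv(S_1, …, S_n)] = P[ker A ∩ g(C̄) ≠ {0}]. -/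

import Mathlib

/-!
Abel summation gives `∑ k, w k • S k = ∑ i, (∑ k ≥ i, w k) • ξ i`, and the tail sums of a
nonnegative weight vector are exactly the nonnegative antitone vectors. Hence
`0 ∈ Conv(S_1, …, S_n)` iff the kernel of `A` meets the reversed chamber `rev(C̄)` nontrivially.
Replacing the chamber `C̄` by `g(C̄)` amounts to replacing the tuple `ξ` by a signed permutation of
it, which by symmetric exchangeability has the same law; so `P[ker A ∩ g(C̄) ≠ {0}]` does not
depend on `g`, and `g = rev` gives the absorption probability. The events involved are closed,
since a nonzero kernel vector in a closed cone can be normalised to lie on the unit sphere.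
-/

open MeasureTheory ProbabilityTheory Finset
open scoped ENNReal

/-- The closed Weyl chamber of type `B_n`: `{x : 0 ≤ x_1 ≤ x_2 ≤ ⋯ ≤ x_n}`. -/
def closedWeylChamberB (n : ℕ) : Set (Fin n → ℝ) :=
  {x | (∀ i, 0 ≤ x i) ∧ Monotone x}

section ConvexHull

variable {𝕜 ι E : Type*} [Field 𝕜] [LinearOrder 𝕜] [IsStrictOrderedRing 𝕜] [Fintype ι]
  [AddCommGroup E] [Module 𝕜 E]

theorem convexHull_range_eq_image_stdSimplex (z : ι → E) :
    convexHull 𝕜 (Set.range z) = Fintype.linearCombination 𝕜 z '' stdSimplex 𝕜 ι := by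
  classical
  rw [← convexHull_rangle_single_eq_stdSimplex, LinearMap.image_convexHull, ← Set.range_comp]
  congr 2
  ext i
  simp

theorem zero_mem_convexHull_range_iff (z : ι → E) :
    (0 : E) ∈ convexHull 𝕜 (Set.range z) ↔
      ∃ w : ι → 𝕜, (∀ i, 0 ≤ w i) ∧ w ≠ 0 ∧ ∑ i, w i • z i = 0 := by
  rw [convexHull_range_eq_image_stdSimplex]
  constructor
  · rintro ⟨w, ⟨hw₀, hw₁⟩, hwz⟩
    refine ⟨w, hw₀, fun h => by simp [h] at hw₁, by rwa [Fintype.linearCombination_apply] at hwz⟩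
  · rintro ⟨w, hw₀, hw, hwz⟩
    have hpos : 0 < ∑ i, w i := by
      obtain ⟨j, hj⟩ := Function.ne_iff.mp hw
      exact (Finset.sum_pos_iff_of_nonneg fun i _ => hw₀ i).mpr
        ⟨j, mem_univ j, (hw₀ j).lt_of_ne' hj⟩
    refine ⟨(∑ i, w i)⁻¹ • w, ⟨fun i => ?_, ?_⟩, ?_⟩
    · exact smul_nonneg (inv_nonneg.mpr hpos.le) (hw₀ i)
    · simp [← Finset.mul_sum, hpos.ne']
    · rw [map_smul, Fintype.linearCombination_apply, hwz, smul_zero]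

end ConvexHull

section PartialSums

theorem sum_smul_sum_Iic {R M : Type*} [Semiring R] [AddCommMonoid M] [Module R M] {n : ℕ}
    (w : Fin n → R) (y : Fin n → M) :
    ∑ k, w k • ∑ i ∈ Iic k, y i = ∑ i, (∑ k ∈ Ici i, w k) • y i := by
  simp_rw [smul_sum, sum_smul]
  exact sum_comm' fun k i => by simp

theorem exists_nonneg_sum_Ici_eq_of_antitone {α : Type*} [AddCommGroup α] [PartialOrder α]
    [IsOrderedAddMonoid α] {n : ℕ} {x : Fin n → α} (hx₀ : ∀ i, 0 ≤ x i) (hx : Antitone x) :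
    ∃ w : Fin n → α, (∀ i, 0 ≤ w i) ∧ ∀ i, ∑ j ∈ Ici i, w j = x i := by
  set x' : ℕ → α := fun m => if h : m < n then x ⟨m, h⟩ else 0
  have hx' : ∀ m, x' (m + 1) ≤ x' m := by
    intro m
    by_cases h : m + 1 < n
    · simp only [x', dif_pos h, dif_pos (Nat.lt_of_succ_lt h)]
      exact hx (Fin.mk_le_mk.mpr m.le_succ)
    · simp only [x', dif_neg h]
      split_ifs <;> simp [hx₀]
  refine ⟨fun j => x' j - x' (j + 1), fun j => sub_nonneg.mpr (hx' j), fun i => ?_⟩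
  change ∑ j ∈ Ici i, (fun m => x' m - x' (m + 1)) (Fin.valEmbedding j) = x i
  rw [← sum_map (Ici i) Fin.valEmbedding (fun m => x' m - x' (m + 1)), Fin.map_valEmbedding_Ici]
  have htel : ∀ m, x' m - x' (m + 1) = -(x' (m + 1) - x' m) := fun m => (neg_sub _ _).symm
  rw [sum_congr rfl fun m _ => htel m, sum_neg_distrib, sum_Ico_sub x' i.is_lt.le, neg_sub]
  simp [x']

theorem zero_mem_convexHull_partialSums_iff {𝕜 E : Type*} [Field 𝕜] [LinearOrder 𝕜]
    [IsStrictOrderedRing 𝕜] [AddCommGroup E] [Module 𝕜 E] {n : ℕ} (y : Fin n → E) :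
    (0 : E) ∈ convexHull 𝕜 (Set.range fun k => ∑ i ∈ Iic k, y i) ↔
      ∃ x : Fin n → 𝕜, ((∀ i, 0 ≤ x i) ∧ Antitone x) ∧ x ≠ 0 ∧ ∑ i, x i • y i = 0 := by
  simp_rw [zero_mem_convexHull_range_iff, sum_smul_sum_Iic]
  constructor
  · rintro ⟨w, hw₀, hw_ne, hwy⟩
    refine ⟨fun i => ∑ k ∈ Ici i, w k, ⟨fun i => sum_nonneg fun k _ => hw₀ k,
      fun i j hij => sum_le_sum_of_subset_of_nonneg (Ici_subset_Ici.mpr hij)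
        fun k _ _ => hw₀ k⟩, fun hx => hw_ne (funext fun k => ?_), hwy⟩
    have hk : w k ≤ ∑ j ∈ Ici k, w j :=
      single_le_sum (fun j _ => hw₀ j) (mem_Ici.mpr le_rfl)
    exact le_antisymm (hk.trans_eq (congrFun hx k)) (hw₀ k)
  · rintro ⟨x, ⟨hx₀, hx⟩, hx_ne, hxy⟩
    obtain ⟨w, hw₀, hwx⟩ := exists_nonneg_sum_Ici_eq_of_antitone hx₀ hx
    refine ⟨w, hw₀, fun hw => hx_ne (funext fun i => ?_), by simpa only [hwx] using hxy⟩
    simp [← hwx i, hw]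

end PartialSums

section SignedPerm

variable {ι : Type*}

/-- The signed permutation `e_i ↦ ε i • e_(σ i)` of `ι → ℝ`. -/
def signedPerm (σ : Equiv.Perm ι) (ε : ι → ℝ) (x : ι → ℝ) : ι → ℝ :=
  fun j => ε (σ.symm j) * x (σ.symm j)

theorem sum_signedPerm_smul {E : Type*} [Fintype ι] [AddCommGroup E] [Module ℝ E]
    (σ : Equiv.Perm ι) (ε : ι → ℝ) (x : ι → ℝ) (y : ι → E) :
    ∑ j, signedPerm σ ε x j • y j = ∑ i, x i • ε i • y (σ i) := by
  rw [← Equiv.sum_comp σ]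
  simp [signedPerm, smul_smul, mul_comm]

@[simp]
theorem signedPerm_zero (σ : Equiv.Perm ι) (ε : ι → ℝ) : signedPerm σ ε 0 = 0 :=
  funext fun j => by simp [signedPerm]

theorem signedPerm_eq_zero_iff {σ : Equiv.Perm ι} {ε : ι → ℝ} (hε : ∀ i, ε i ≠ 0)
    {x : ι → ℝ} : signedPerm σ ε x = 0 ↔ x = 0 := by
  refine ⟨fun h => funext fun i => ?_, fun h => h ▸ signedPerm_zero σ ε⟩
  simpa [signedPerm, hε i] using congrFun h (σ i)

end SignedPerm

section KernelMeets

variable {ι E : Type*} [Fintype ι] [AddCommGroup E] [Module ℝ E]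

/-- `y ∈ kernelMeets D` says `ker A ∩ D ≠ {0}` for the linear map `A e_k = y k`. -/
def kernelMeets (D : Set (ι → ℝ)) : Set (ι → E) :=
  {y | ∃ x ∈ D, x ≠ 0 ∧ ∑ k, x k • y k = 0}

theorem mem_kernelMeets_iff_inter_ne_singleton {D : Set (ι → ℝ)} (hD : (0 : ι → ℝ) ∈ D)
    (y : ι → E) :
    y ∈ kernelMeets D ↔ {x : ι → ℝ | ∑ k, x k • y k = 0} ∩ D ≠ {0} := by
  have h0 : (0 : ι → ℝ) ∈ {x : ι → ℝ | ∑ k, x k • y k = 0} ∩ D := ⟨by simp, hD⟩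
  rw [← Set.nontrivial_iff_ne_singleton h0, Set.nontrivial_iff_exists_ne h0]
  exact ⟨fun ⟨x, hxD, hx, hxy⟩ => ⟨x, ⟨hxy, hxD⟩, hx⟩,
    fun ⟨x, ⟨hxy, hxD⟩, hx⟩ => ⟨x, hxD, hx, hxy⟩⟩

theorem isClosed_kernelMeets [TopologicalSpace E] [IsTopologicalAddGroup E]
    [ContinuousSMul ℝ E] [T1Space E] {D : Set (ι → ℝ)} (hD : IsClosed D)
    (hcone : ∀ c : ℝ, 0 < c → ∀ x ∈ D, c • x ∈ D) :
    IsClosed (kernelMeets (E := E) D) := by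
  set K := Metric.sphere (0 : ι → ℝ) 1 ∩ D
  have : CompactSpace K := isCompact_iff_compactSpace.mp ((isCompact_sphere 0 1).inter_right hD)
  have hK : kernelMeets D =
      Prod.snd '' {p : K × (ι → E) | ∑ k, (p.1 : ι → ℝ) k • p.2 k = 0} := by
    ext y
    constructor
    · rintro ⟨x, hxD, hx, hxy⟩
      have hnorm : 0 < ‖x‖ := norm_pos_iff.mpr hx
      refine ⟨(⟨‖x‖⁻¹ • x, ?_, hcone _ (inv_pos.mpr hnorm) x hxD⟩, y), ?_, rfl⟩
      · simp [norm_smul, hnorm.ne']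
      · simp [mul_smul, ← smul_sum, hxy]
    · rintro ⟨⟨⟨x, hx, hxD⟩, y⟩, hxy, rfl⟩
      exact ⟨x, hxD, ne_zero_of_mem_unit_sphere ⟨x, hx⟩, hxy⟩
  rw [hK]
  exact isClosedMap_snd_of_compactSpace _ (isClosed_eq (continuous_finsetSum _ fun k _ =>
    ((continuous_apply k).comp (continuous_subtype_val.comp continuous_fst)).smul
      ((continuous_apply k).comp continuous_snd)) continuous_const)

theorem mem_kernelMeets_image_signedPerm {σ : Equiv.Perm ι} {ε : ι → ℝ} (hε : ∀ i, ε i ≠ 0)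
    (D : Set (ι → ℝ)) (y : ι → E) :
    y ∈ kernelMeets (signedPerm σ ε '' D) ↔ (fun i => ε i • y (σ i)) ∈ kernelMeets D := by
  simp only [kernelMeets, Set.mem_ofPred_eq, Set.exists_mem_image, sum_signedPerm_smul,
    Ne, signedPerm_eq_zero_iff hε]

end KernelMeets

section WeylChamber

theorem isClosed_closedWeylChamberB (n : ℕ) : IsClosed (closedWeylChamberB n) :=
  (isClosed_Ici (a := 0)).inter isClosed_monotone

theorem smul_mem_closedWeylChamberB {n : ℕ} {c : ℝ} (hc : 0 ≤ c) {x : Fin n → ℝ}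
    (hx : x ∈ closedWeylChamberB n) : c • x ∈ closedWeylChamberB n :=
  ⟨fun i => mul_nonneg hc (hx.1 i), fun _ _ hij => mul_le_mul_of_nonneg_left (hx.2 hij) hc⟩

theorem zero_mem_closedWeylChamberB (n : ℕ) : (0 : Fin n → ℝ) ∈ closedWeylChamberB n :=
  ⟨fun _ => le_rfl, monotone_const⟩

theorem image_signedPerm_revPerm_closedWeylChamberB (n : ℕ) :
    signedPerm Fin.revPerm 1 '' closedWeylChamberB n = {x | (∀ i, 0 ≤ x i) ∧ Antitone x} := by
  ext x
  constructor
  · rintro ⟨u, ⟨hu₀, hu⟩, rfl⟩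
    exact ⟨fun i => by simp [signedPerm, hu₀],
      fun i j hij => by simpa [signedPerm] using hu (Fin.rev_le_rev.mpr hij)⟩
  · rintro ⟨hx₀, hx⟩
    refine ⟨fun i => x i.rev, ⟨fun i => hx₀ _, hx.comp Fin.rev_anti⟩, ?_⟩
    funext j
    simp [signedPerm]

end WeylChamber

section Exchangeability

variable {Ω ι E : Type*} [MeasurableSpace Ω] [Fintype ι] [AddCommGroup E] [Module ℝ E]
  [MeasurableSpace E]

def SymmetricallyExchangeable (μ : Measure Ω) (ξ : ι → Ω → E) : Prop :=
  ∀ (σ : Equiv.Perm ι) (ε : ι → ℝ), (∀ i, ε i = 1 ∨ ε i = -1) →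
    μ.map (fun ω i => ξ i ω) = μ.map (fun ω i => ε i • ξ (σ i) ω)

theorem SymmetricallyExchangeable.measure_kernelMeets_image_signedPerm
    [MeasurableConstSMul ℝ E] {μ : Measure Ω} {ξ : ι → Ω → E} (h : SymmetricallyExchangeable μ ξ)
    (hξ : ∀ i, Measurable (ξ i)) {D : Set (ι → ℝ)} (hD : MeasurableSet (kernelMeets (E := E) D))
    {σ : Equiv.Perm ι} {ε : ι → ℝ} (hε : ∀ i, ε i = 1 ∨ ε i = -1) :
    μ {ω | (fun i => ξ i ω) ∈ kernelMeets (signedPerm σ ε '' D)} =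
      μ {ω | (fun i => ξ i ω) ∈ kernelMeets D} := by
  have hε₀ : ∀ i, ε i ≠ 0 := fun i => by rcases hε i with h | h <;> simp [h]
  simp_rw [mem_kernelMeets_image_signedPerm hε₀]
  have hY : Measurable fun ω i => ξ i ω := measurable_pi_lambda _ hξ
  have hY' : Measurable fun ω i => ε i • ξ (σ i) ω :=
    measurable_pi_lambda _ fun i => (hξ (σ i)).const_smul (ε i)
  change μ ((fun ω i => ε i • ξ (σ i) ω) ⁻¹' kernelMeets D) =
    μ ((fun ω i => ξ i ω) ⁻¹' kernelMeets D)
  rw [← Measure.map_apply hY' hD, ← Measure.map_apply hY hD, h σ ε hε]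

end Exchangeability

theorem absorption_eq_kernel_meets_chamber_general
    {Ω : Type*} [MeasureSpace Ω]
    (n d : ℕ)
    (ξ : Fin n → Ω → EuclideanSpace ℝ (Fin d))
    (hmeas : ∀ i, Measurable (ξ i))
    (hsymmexch : ∀ (σ : Equiv.Perm (Fin n)) (ε : Fin n → ℝ),
      (∀ i, ε i = 1 ∨ ε i = -1) →
      Measure.map (fun ω i => ξ i ω) ℙ
        = Measure.map (fun ω i => ε i • ξ (σ i) ω) ℙ)
    (S : Fin n → Ω → EuclideanSpace ℝ (Fin d))
    (hS : ∀ k ω, S k ω = ∑ i ∈ Finset.Iic k, ξ i ω)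
    (σ : Equiv.Perm (Fin n)) (ε : Fin n → ℝ) (hε : ∀ i, ε i = 1 ∨ ε i = -1) :
    ℙ {ω | (0 : EuclideanSpace ℝ (Fin d)) ∈
        convexHull ℝ (Set.range fun k => S k ω)}
      = ℙ {ω | {x : Fin n → ℝ | ∑ k, x k • ξ k ω = 0}
            ∩ ((fun (x : Fin n → ℝ) (j : Fin n) => ε (σ.symm j) * x (σ.symm j)) ''
                closedWeylChamberB n)
          ≠ {0}} := by
  have hexch : SymmetricallyExchangeable ℙ ξ := hsymmexch
  have hC : MeasurableSet (kernelMeets (E := EuclideanSpace ℝ (Fin d)) (closedWeylChamberB n)) :=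
    (isClosed_kernelMeets (isClosed_closedWeylChamberB n)
      fun _ hc _ => smul_mem_closedWeylChamberB hc.le).measurableSet
  have h0 : (0 : Fin n → ℝ) ∈ signedPerm σ ε '' closedWeylChamberB n :=
    ⟨0, zero_mem_closedWeylChamberB n, signedPerm_zero σ ε⟩
  calc ℙ {ω | (0 : EuclideanSpace ℝ (Fin d)) ∈ convexHull ℝ (Set.range fun k => S k ω)}
      = ℙ {ω | (fun i => ξ i ω) ∈
          kernelMeets (signedPerm Fin.revPerm 1 '' closedWeylChamberB n)} := by
        simp_rw [hS, zero_mem_convexHull_partialSums_iff,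
          image_signedPerm_revPerm_closedWeylChamberB]
        rfl
    _ = ℙ {ω | (fun i => ξ i ω) ∈ kernelMeets (closedWeylChamberB n)} :=
        hexch.measure_kernelMeets_image_signedPerm hmeas hC fun _ => Or.inl rfl
    _ = ℙ {ω | (fun i => ξ i ω) ∈ kernelMeets (signedPerm σ ε '' closedWeylChamberB n)} :=
        (hexch.measure_kernelMeets_image_signedPerm hmeas hC hε).symm
    _ = _ := by simp_rw [mem_kernelMeets_iff_inter_ne_singleton h0]; rfl

/-- Lemma (type `B_n`): for a symmetrically exchangeable tuple of increments in `ℝ^d`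
with partial sums `S_1, …, S_n` and the random linear map `A : ℝ^n → ℝ^d`, `A e_k = ξ_k`,
the absorption probability `P[0 ∈ Conv(S_1,…,S_n)]` equals
`P[ker A ∩ g(C̄) ≠ {0}]` for every signed permutation `g` (given by a permutation `σ`
and signs `ε`, acting by `(g x) j = ε (σ⁻¹ j) x (σ⁻¹ j)`), where `C̄` is the closed Weyl
chamber of type `B_n`. -/
theorem absorption_eq_kernel_meets_chamber
    {Ω : Type*} [MeasureSpace Ω] [IsProbabilityMeasure (ℙ : Measure Ω)]
    (n d : ℕ)
    (ξ : Fin n → Ω → EuclideanSpace ℝ (Fin d))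
    (hmeas : ∀ i, Measurable (ξ i))
    (hsymmexch : ∀ (σ : Equiv.Perm (Fin n)) (ε : Fin n → ℝ),
      (∀ i, ε i = 1 ∨ ε i = -1) →
      Measure.map (fun ω i => ξ i ω) ℙ
        = Measure.map (fun ω i => ε i • ξ (σ i) ω) ℙ)
    (S : Fin n → Ω → EuclideanSpace ℝ (Fin d))
    (hS : ∀ k ω, S k ω = ∑ i ∈ Finset.Iic k, ξ i ω)
    (σ : Equiv.Perm (Fin n)) (ε : Fin n → ℝ) (hε : ∀ i, ε i = 1 ∨ ε i = -1) :
    ℙ {ω | (0 : EuclideanSpace ℝ (Fin d)) ∈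
        convexHull ℝ (Set.range fun k => S k ω)}
      = ℙ {ω | {x : Fin n → ℝ | ∑ k, x k • ξ k ω = 0}
            ∩ ((fun (x : Fin n → ℝ) (j : Fin n) => ε (σ.symm j) * x (σ.symm j)) ''
                closedWeylChamberB n)
          ≠ {0}} :=
  absorption_eq_kernel_meets_chamber_general n d ξ hmeas hsymmexch S hS σ ε hε
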